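/- Let κ > 0, τ₀ > 0, K > 0, and θ, u, v be real numbers. For ε > 0 with κε ≠ 1 define a₁^ε = (ε/τ₀)(1 − e^{−τ₀/ε}), A = (1/(κτ₀))(1 − e^{−κτ₀}), a₂^ε = A + (A − a₁^ε)/(1 − κε), a₂* = 2A, S(ε) = a₁^ε·u + a₂^ε·v + (2 − a₁^ε − a₂^ε)·θ, and S* = a₂*·v + (2 − a₂*)·θ. Assume S* > 0 and 100·√S* > K. Then the function ε ↦ max(100·√(S(ε)) − K, 0) − (100·√S* − K) − (100/(2·√S*))·[a₁^ε·(u − v) + (ε/τ₀)(1 − e^{−κτ₀})·(v − θ)] is O(ε²) as ε → 0⁺. -/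

import Mathlib

open Real Filter Asymptotics Topology

/-!
Since `(ε/τ₀)(1 − e^{−κτ₀}) = κεA`, `S(ε) − S*` splits into the bracket
`L(ε) = a₁^ε (u − v) + κεA (v − θ)`, of order `ε` because `0 ≤ a₁^ε ≤ ε/τ₀`, and the remainder
`(v − θ) · b(ε) · κε/(1 − κε)` with `b(ε) = κεA − a₁^ε = O(ε)`, which is `O(ε²)`.
As `S(ε) → S* > 0`, the option is eventually in the money, and the second-order Taylor bound
for `√` at `S*` turns this into the expansion of the payoff.
-/

theorem Real.abs_sqrt_sub_sqrt_sub_div_le {x y : ℝ} (hx : 0 ≤ x) (hy : 0 < y) :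
    |√x - √y - (x - y) / (2 * √y)| ≤ (x - y) ^ 2 / (2 * y * √y) := by
  have ht : 0 < √y := sqrt_pos.2 hy
  have hs : 0 ≤ √x := sqrt_nonneg x
  have hst : x - y = (√x - √y) * (√x + √y) := by
    linear_combination sq_sqrt hy.le - sq_sqrt hx
  have hcancel : √x - √y - (x - y) / (2 * √y) = -(√x - √y) ^ 2 / (2 * √y) := by
    rw [hst]; field_simp; ring
  have hsq : (√x - √y) ^ 2 * y ≤ (x - y) ^ 2 := by
    have hy' : y ≤ (√x + √y) ^ 2 := by nlinarith [sq_sqrt hy.le]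
    rw [hst, mul_pow]
    exact mul_le_mul_of_nonneg_left hy' (sq_nonneg _)
  rw [hcancel, abs_div, abs_neg, abs_of_nonneg (sq_nonneg _), abs_of_pos (by positivity),
    div_le_div_iff₀ (by positivity) (by positivity)]
  nlinarith [sq_nonneg (√x - √y)]

section Asymptotics

variable {α : Type*} {l : Filter α}

theorem isBigO_sqrt_sub_sqrt_sub_div {f g : α → ℝ} {y : ℝ} (hy : 0 < y)
    (hf : ∀ᶠ x in l, 0 ≤ f x) (hfg : (fun x => f x - y) =O[l] g) :
    (fun x => √(f x) - √y - (f x - y) / (2 * √y)) =O[l] fun x => g x ^ 2 := by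
  refine IsBigO.trans ?_ (hfg.pow 2)
  refine IsBigO.of_bound (1 / (2 * y * √y)) ?_
  filter_upwards [hf] with x hx
  rw [norm_eq_abs, norm_eq_abs, abs_of_nonneg (sq_nonneg (f x - y)), one_div_mul_eq_div]
  exact abs_sqrt_sub_sqrt_sub_div_le hx hy

theorem isBigO_div_one_sub_sub {b r : α → ℝ} (hr : Tendsto r l (𝓝 0)) :
    (fun x => b x / (1 - r x) - b x) =O[l] fun x => r x * b x := by
  have hinv : (fun x => (1 - r x)⁻¹) =O[l] fun _ => (1 : ℝ) := by
    have : Tendsto (fun x => (1 - r x)⁻¹) l (𝓝 1) := by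
      simpa using (tendsto_const_nhds.sub hr).inv₀ (by norm_num : (1 : ℝ) - 0 ≠ 0)
    exact this.isBigO_one ℝ
  refine ((isBigO_refl (fun x => r x * b x) l).mul hinv).congr' ?_ (by simp)
  filter_upwards [hr.eventually_ne zero_ne_one] with x hx
  have : 1 - r x ≠ 0 := sub_ne_zero.2 hx.symm
  field_simp
  ring

theorem isBigO_div_mul_one_sub_exp_neg_div {τ : ℝ} (hτ : 0 ≤ τ) :
    (fun ε => ε / τ * (1 - exp (-τ / ε))) =O[𝓝[>] 0] fun ε => ε := by
  refine IsBigO.of_bound τ⁻¹ ?_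
  filter_upwards [self_mem_nhdsWithin] with ε (hε : 0 < ε)
  have hexp : exp (-τ / ε) ≤ 1 :=
    exp_le_one_iff.2 (div_nonpos_of_nonpos_of_nonneg (by linarith) hε.le)
  have hfactor : |1 - exp (-τ / ε)| ≤ 1 := by
    rw [abs_of_nonneg (sub_nonneg.2 hexp)]; linarith [exp_pos (-τ / ε)]
  calc ‖ε / τ * (1 - exp (-τ / ε))‖ = |ε / τ| * |1 - exp (-τ / ε)| := by
        rw [norm_eq_abs, abs_mul]
    _ ≤ |ε / τ| := mul_le_of_le_one_right (abs_nonneg _) hfactor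
    _ = τ⁻¹ * ‖ε‖ := by rw [abs_div, abs_of_nonneg hτ, norm_eq_abs]; ring

theorem isBigO_max_mul_sqrt_sub_linear {S L g : α → ℝ} {c y K : ℝ} (hy : 0 < y)
    (hitm : K < c * √y) (hg : Tendsto g l (𝓝 0)) (hL : L =O[l] g)
    (hR : (fun x => S x - y - L x) =O[l] fun x => g x ^ 2) :
    (fun x => max (c * √(S x) - K) 0 - (c * √y - K) - c / (2 * √y) * L x)
      =O[l] fun x => g x ^ 2 := by
  have hg2 : (fun x => g x ^ 2) =O[l] g := by
    simpa [sq] using (isBigO_refl g l).mul (hg.isBigO_one ℝ)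
  have hD : (fun x => S x - y) =O[l] g :=
    (hL.add (hR.trans hg2)).congr_left fun x => by ring
  have hSy : Tendsto S l (𝓝 y) := by
    simpa using (hD.trans_tendsto hg).add_const y
  have hsqrt := isBigO_sqrt_sub_sqrt_sub_div hy (hSy.eventually (eventually_ge_nhds hy)) hD
  have hS_itm : ∀ᶠ x in l, K < c * √(S x) :=
    (((continuous_sqrt.tendsto y).comp hSy).const_mul c).eventually (eventually_gt_nhds hitm)
  refine ((hsqrt.const_mul_left c).add (hR.const_mul_left (c / (2 * √y)))).congr' ?_
    EventuallyEq.rfl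
  filter_upwards [hS_itm] with x hx
  have : √y ≠ 0 := (sqrt_pos.2 hy).ne'
  rw [max_eq_left (by linarith)]
  field_simp
  ring

end Asymptotics

theorem vix_payoff_expansion_general (κ τ₀ K θ u v : ℝ) (hκ : 0 < κ) (hτ₀ : 0 < τ₀)
    (a₁ : ℝ → ℝ) (A : ℝ) (a₂ : ℝ → ℝ) (a₂star : ℝ) (S : ℝ → ℝ) (Sstar : ℝ)
    (ha₁ : ∀ ε : ℝ, 0 < ε → a₁ ε = (ε / τ₀) * (1 - Real.exp (-τ₀ / ε)))
    (hA : A = (1 / (κ * τ₀)) * (1 - Real.exp (-κ * τ₀)))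
    (ha₂ : ∀ ε : ℝ, 0 < ε → κ * ε ≠ 1 → a₂ ε = A + (A - a₁ ε) / (1 - κ * ε))
    (ha₂star : a₂star = 2 * A)
    (hS : ∀ ε : ℝ, S ε = a₁ ε * u + a₂ ε * v + (2 - a₁ ε - a₂ ε) * θ)
    (hSstar : Sstar = a₂star * v + (2 - a₂star) * θ)
    (hSpos : 0 < Sstar) (hitm : K < 100 * Real.sqrt Sstar) :
    (fun ε : ℝ =>
        max (100 * Real.sqrt (S ε) - K) 0
          - (100 * Real.sqrt Sstar - K)
          - (100 / (2 * Real.sqrt Sstar))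
              * (a₁ ε * (u - v) + (ε / τ₀) * (1 - Real.exp (-κ * τ₀)) * (v - θ)))
      =O[nhdsWithin 0 (Set.Ioi 0)] (fun ε : ℝ => ε ^ 2) := by
  have hε : Tendsto (fun ε : ℝ => ε) (𝓝[>] 0) (𝓝 0) := tendsto_nhdsWithin_of_tendsto_nhds tendsto_id
  have hκε : Tendsto (fun ε => κ * ε) (𝓝[>] 0) (𝓝 0) := by simpa using hε.const_mul κ
  have ha₁O : a₁ =O[𝓝[>] 0] fun ε => ε := by
    refine (isBigO_div_mul_one_sub_exp_neg_div hτ₀.le).congr' ?_ EventuallyEq.rfl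
    filter_upwards [self_mem_nhdsWithin] with ε hε using (ha₁ ε hε).symm
  have hlin : (fun ε => ε / τ₀ * (1 - exp (-κ * τ₀)) * (v - θ)) =O[𝓝[>] 0] fun ε => ε :=
    (isBigO_const_mul_self ((1 - exp (-κ * τ₀)) * (v - θ) / τ₀) _ _).congr_left fun ε => by ring
  have hb : (fun ε => κ * ε * A - a₁ ε) =O[𝓝[>] 0] fun ε => ε :=
    ((isBigO_const_mul_self (κ * A) _ _).congr_left fun ε => by ring).sub ha₁O
  have hrem : ∀ᶠ ε in 𝓝[>] 0, (v - θ) * ((κ * ε * A - a₁ ε) / (1 - κ * ε) - (κ * ε * A - a₁ ε))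
      = S ε - Sstar - (a₁ ε * (u - v) + ε / τ₀ * (1 - exp (-κ * τ₀)) * (v - θ)) := by
    filter_upwards [self_mem_nhdsWithin, hκε.eventually_ne zero_ne_one] with ε hε hne
    have : 1 - κ * ε ≠ 0 := sub_ne_zero.2 hne.symm
    have : κ ≠ 0 := hκ.ne'
    rw [hS, hSstar, ha₂star, ha₂ ε hε hne, hA]
    field_simp
    ring
  have hL : (fun ε => a₁ ε * (u - v) + ε / τ₀ * (1 - exp (-κ * τ₀)) * (v - θ))
      =O[𝓝[>] 0] fun ε => ε :=
    ((ha₁O.const_mul_left (u - v)).congr_left fun ε => mul_comm _ _).add hlin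
  refine isBigO_max_mul_sqrt_sub_linear hSpos hitm hε hL ?_
  refine (((isBigO_div_one_sub_sub hκε).const_mul_left (v - θ)).congr' hrem EventuallyEq.rfl).trans
    ?_
  exact ((isBigO_const_mul_self κ _ _).mul hb).congr_right fun ε => by ring

/-- The expansion of the in-the-money VIX call payoff:
`(100√(S(ε)) − K)⁺ = (100√S* − K) + (100/(2√S*))·[a₁^ε(u − v) + (ε/τ₀)(1 − e^{−κτ₀})(v − θ)] + O(ε²)`
as `ε → 0⁺`, where `S(ε) = a₁^ε u + a₂^ε v + (2 − a₁^ε − a₂^ε)θ`, `S* = a₂* v + (2 − a₂*)θ`,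
assuming `S* > 0` and `100√S* > K`. -/
theorem vix_payoff_expansion (κ τ₀ K θ u v : ℝ) (hκ : 0 < κ) (hτ₀ : 0 < τ₀) (hK : 0 < K)
    (a₁ : ℝ → ℝ) (A : ℝ) (a₂ : ℝ → ℝ) (a₂star : ℝ) (S : ℝ → ℝ) (Sstar : ℝ)
    (ha₁ : ∀ ε : ℝ, 0 < ε → a₁ ε = (ε / τ₀) * (1 - Real.exp (-τ₀ / ε)))
    (hA : A = (1 / (κ * τ₀)) * (1 - Real.exp (-κ * τ₀)))
    (ha₂ : ∀ ε : ℝ, 0 < ε → κ * ε ≠ 1 → a₂ ε = A + (A - a₁ ε) / (1 - κ * ε))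
    (ha₂star : a₂star = 2 * A)
    (hS : ∀ ε : ℝ, S ε = a₁ ε * u + a₂ ε * v + (2 - a₁ ε - a₂ ε) * θ)
    (hSstar : Sstar = a₂star * v + (2 - a₂star) * θ)
    (hSpos : 0 < Sstar) (hitm : K < 100 * Real.sqrt Sstar) :
    (fun ε : ℝ =>
        max (100 * Real.sqrt (S ε) - K) 0
          - (100 * Real.sqrt Sstar - K)
          - (100 / (2 * Real.sqrt Sstar))
              * (a₁ ε * (u - v) + (ε / τ₀) * (1 - Real.exp (-κ * τ₀)) * (v - θ)))
      =O[nhdsWithin 0 (Set.Ioi 0)] (fun ε : ℝ => ε ^ 2) :=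
  vix_payoff_expansion_general κ τ₀ K θ u v hκ hτ₀ a₁ A a₂ a₂star S Sstar ha₁ hA ha₂ ha₂star hS
    hSstar hSpos hitm
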